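/- Let n ≥ 2 and let f : (Fin n → ℂ) → ℂ be a symmetric function, i.e. f(x ∘ σ) = f(x) for every permutation σ of Fin n. Suppose f is twice continuously ℂ-differentiable in a neighborhood of the diagonal point (z, z, …, z). Let g : ℂ → ℂ denote the diagonal restriction g(z) = f(z, z, …, z). Then g″(z) = n · ∂₁²f(z, …, z) + n(n−1) · ∂₁∂₂f(z, …, z), where ∂₁²f is the repeated partial derivative in the first coordinate and ∂₁∂₂f is the mixed partial derivative in the first two coordinates, both evaluated on the diagonal. -/

import Mathlib

open Filter Topology

/-!
Writing `H` for the second derivative of `f` at `(z, …, z)`, the chain rule gives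
`g''(z) = H 𝟙 𝟙 = ∑ k l, H eₖ eₗ` with `𝟙 = (1, …, 1)`. Symmetry of `f` makes `H` invariant under
permuting the coordinates of both arguments at once, and the symmetric group is 2-transitive,
so all `n` diagonal terms equal `H e₀ e₀` and all `n(n-1)` off-diagonal ones equal `H e₁ e₀`.
-/

theorem Equiv.Perm.exists_apply_eq_and_apply_eq {ι : Type*} {a b c d : ι} (hab : a ≠ b)
    (hcd : c ≠ d) : ∃ σ : Equiv.Perm ι, σ a = c ∧ σ b = d :=
  MulAction.is_two_pretransitive_iff.mp (Equiv.Perm.isMultiplyPretransitive ι 2) hab hcd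

theorem Fintype.sum_sum_eq_of_perm_invariant {ι M : Type*} [Fintype ι] [DecidableEq ι]
    [AddCommMonoid M] {a : ι → ι → M} (ha : ∀ (σ : Equiv.Perm ι) i j, a (σ i) (σ j) = a i j)
    {i j : ι} (hij : i ≠ j) :
    ∑ k, ∑ l, a k l = card ι • a i i + (card ι * (card ι - 1)) • a j i := by
  have diag (k : ι) : a k k = a i i := by simpa using ha (Equiv.swap i k) i i
  have offDiag (k l : ι) (hkl : k ≠ l) : a k l = a j i := by
    obtain ⟨σ, rfl, rfl⟩ := Equiv.Perm.exists_apply_eq_and_apply_eq hij.symm hkl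
    exact ha σ j i
  have row (k : ι) : ∑ l, a k l = a i i + (card ι - 1) • a j i := by
    rw [sum_eq_add_sum_compl k, diag, Finset.sum_congr rfl fun l hl =>
      offDiag k l (Ne.symm (by simpa using hl)), Finset.sum_const,
      Finset.card_compl, Finset.card_singleton]
  simp only [row, Finset.sum_const, Finset.card_univ, smul_add, mul_smul]

section SecondDerivative

variable {𝕜 E F G : Type*} [NontriviallyNormedField 𝕜] [NormedAddCommGroup E] [NormedSpace 𝕜 E]
  [NormedAddCommGroup F] [NormedSpace 𝕜 F] [NormedAddCommGroup G] [NormedSpace 𝕜 G]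

theorem fderiv_clm_apply_const_apply {c : E → F →L[𝕜] G} {x : E}
    (hc : DifferentiableAt 𝕜 c x) (u : E) (v : F) :
    fderiv 𝕜 (fun y => c y v) x u = fderiv 𝕜 c x u v := by
  simp [fderiv_clm_apply hc (differentiableAt_const v)]

theorem fderiv_fderiv_comp_continuousLinearEquiv (f : E → F) (e : G ≃L[𝕜] E) (x u v : G) :
    fderiv 𝕜 (fderiv 𝕜 (f ∘ e)) x u v = fderiv 𝕜 (fderiv 𝕜 f) (e x) (e u) (e v) := by
  have h : fderiv 𝕜 (f ∘ e) = e.symm.arrowCongr (.refl 𝕜 F) ∘ fderiv 𝕜 f ∘ e := by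
    funext y
    ext w
    simp [e.comp_right_fderiv]
  rw [h, ContinuousLinearEquiv.comp_fderiv, e.comp_right_fderiv]
  simp

theorem fderiv_fderiv_perm_invariant {ι : Type*} [Fintype ι] {f : (ι → E) → F}
    (hf : ∀ (σ : Equiv.Perm ι) x, f (x ∘ σ) = f x) (σ : Equiv.Perm ι) (x u v : ι → E) :
    fderiv 𝕜 (fderiv 𝕜 f) (x ∘ σ) (u ∘ σ) (v ∘ σ) = fderiv 𝕜 (fderiv 𝕜 f) x u v := by
  set e := ContinuousLinearEquiv.piCongrLeft 𝕜 (fun _ : ι => E) σ.symm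
  have he (y : ι → E) : e y = y ∘ σ := by
    ext i
    simp [e, ContinuousLinearEquiv.piCongrLeft, Equiv.piCongrLeft_apply]
  have hfe : f ∘ e = f := funext fun y => by simp [he, hf]
  rw [← he, ← he, ← he, ← fderiv_fderiv_comp_continuousLinearEquiv, hfe]

theorem deriv_deriv_comp_clm {f : E → F} (L : 𝕜 →L[𝕜] E) {z : 𝕜} (hf : ContDiffAt 𝕜 2 f (L z)) :
    deriv (deriv (f ∘ L)) z = fderiv 𝕜 (fderiv 𝕜 f) (L z) (L 1) (L 1) := by
  have hdiff : ∀ᶠ w in 𝓝 z, DifferentiableAt 𝕜 f (L w) :=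
    (L.continuous.tendsto z).eventually <|
      (hf.eventually (by simp)).mono fun y hy => hy.differentiableAt two_ne_zero
  have hderiv : deriv (f ∘ L) =ᶠ[𝓝 z] fun w => fderiv 𝕜 f (L w) (L 1) :=
    hdiff.mono fun w hw => (hw.hasFDerivAt.comp w L.hasFDerivAt).hasDerivAt.deriv
  have hD : DifferentiableAt 𝕜 (fderiv 𝕜 f) (L z) :=
    (hf.fderiv_right (m := 1) (by norm_num)).differentiableAt one_ne_zero
  rw [hderiv.deriv_eq]
  exact (((ContinuousLinearMap.apply 𝕜 F (L 1)).hasFDerivAt.comp z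
    (hD.hasFDerivAt.comp z L.hasFDerivAt)).hasDerivAt).deriv

theorem ContinuousLinearMap.apply_one_one_eq_sum_sum {ι : Type*} [Fintype ι] [DecidableEq ι]
    (B : (ι → 𝕜) →L[𝕜] (ι → 𝕜) →L[𝕜] F) :
    B 1 1 = ∑ k, ∑ l, B (Pi.single k 1) (Pi.single l 1) := by
  conv_lhs => rw [← Finset.univ_sum_single (1 : ι → 𝕜)]
  simp only [map_sum, FunLike.coe_sum, Finset.sum_apply, Pi.one_apply]
  exact Finset.sum_comm

end SecondDerivative

/-- second identity of equation (6.3), Lemma 6.4.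
If `f : (Fin n → ℂ) → ℂ` (with `n ≥ 2`) is symmetric and twice continuously
ℂ-differentiable near the diagonal point `(z, …, z)`, then the second derivative
of the diagonal restriction `g(w) = f(w, …, w)` satisfies
`g″(z) = n ∂₁²f(z,…,z) + n(n−1) ∂₁∂₂f(z,…,z)`. -/
theorem diagonal_second_deriv_symmetric_fun
    (n : ℕ) (hn : 2 ≤ n) (f : (Fin n → ℂ) → ℂ) (z : ℂ)
    (hsym : ∀ (σ : Equiv.Perm (Fin n)) (x : Fin n → ℂ), f (x ∘ σ) = f x)
    (hC2 : ContDiffAt ℂ 2 f (fun _ => z)) :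
    deriv (deriv (fun w : ℂ => f (fun _ => w))) z =
      (n : ℂ) * fderiv ℂ (fun p => fderiv ℂ f p (Pi.single (⟨0, by omega⟩ : Fin n) 1))
          (fun _ => z) (Pi.single (⟨0, by omega⟩ : Fin n) 1)
      + (n : ℂ) * ((n : ℂ) - 1) *
          fderiv ℂ (fun p => fderiv ℂ f p (Pi.single (⟨0, by omega⟩ : Fin n) 1))
            (fun _ => z) (Pi.single (⟨1, by omega⟩ : Fin n) 1) := by
  have hD : DifferentiableAt ℂ (fderiv ℂ f) (fun _ => z) :=
    (hC2.fderiv_right (m := 1) (by norm_num)).differentiableAt one_ne_zero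
  have hinv (σ : Equiv.Perm (Fin n)) (i j : Fin n) :
      fderiv ℂ (fderiv ℂ f) (fun _ => z) (Pi.single (σ i) 1) (Pi.single (σ j) 1) =
        fderiv ℂ (fderiv ℂ f) (fun _ => z) (Pi.single i 1) (Pi.single j 1) := by
    have h := fderiv_fderiv_perm_invariant (𝕜 := ℂ) hsym σ (fun _ => z)
      (Pi.single (σ i) 1) (Pi.single (σ j) 1)
    rw [Pi.single_comp_equiv, Pi.single_comp_equiv, σ.symm_apply_apply, σ.symm_apply_apply] at h
    exact h.symm
  have hdiag : deriv (deriv fun w : ℂ => f fun _ => w) z =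
      fderiv ℂ (fderiv ℂ f) (fun _ => z) 1 1 :=
    deriv_deriv_comp_clm (ContinuousLinearMap.pi fun _ => .id ℂ ℂ : ℂ →L[ℂ] Fin n → ℂ) hC2
  rw [hdiag, fderiv_clm_apply_const_apply hD, fderiv_clm_apply_const_apply hD,
    ContinuousLinearMap.apply_one_one_eq_sum_sum,
    Fintype.sum_sum_eq_of_perm_invariant hinv (i := ⟨0, by omega⟩) (j := ⟨1, by omega⟩)
      (by simp [Fin.ext_iff]), Fintype.card_fin]
  push_cast [nsmul_eq_mul, Nat.cast_sub (by omega : 1 ≤ n)]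
  rfl
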